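/- Let Y = Xβ + e with X a real n×p matrix, β ∈ ℝ^p such that β_j ≠ 0 for 1 ≤ j ≤ s and β_j = 0 for s < j ≤ p, and e ∈ ℝ^n. Write X = (X_{(1)}, X_{(2)}) with X_{(1)} the first s columns, assume Σ̂₁₁ = X_{(1)}'X_{(1)}/n is invertible, set Σ̂₂₁ = X_{(2)}'X_{(1)}/n, W_n = X'e/√n with W_n(1) and W_n(2) its first s and last p−s entries, and let β̂ be a minimizer over b ∈ ℝ^p of |Y − Xb|₂² + λ|b|₁ with λ ≥ 0. Define the events B_n = { for all 1 ≤ j ≤ s: |[Σ̂₁₁^{−1}W_n(1)]_j| < √n·|β_j| − (λ/(2√n))·|[Σ̂₁₁^{−1} sign(β_{(1)})]_j| } and D_n = { for all s < k ≤ p: |[Σ̂₂₁Σ̂₁₁^{−1}W_n(1) − W_n(2)]_{k}| ≤ (λ/(2√n))·(1 − |[Σ̂₂₁Σ̂₁₁^{−1} sign(β_{(1)})]_{k}|) }. Then on the event B_n ∩ D_n there is a Lasso solution β̂ with sign(β̂_j) = sign(β_j) for all j; consequently P(β̂ =_s β) ≥ P(B_n ∩ D_n). -/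

import Mathlib

/-!
Primal–dual witness. With `G = X₁ᵀX₁`, put `b = (β₁ + d, 0)` where
`d = G⁻¹(X₁ᵀe - (λ/2) sign β₁)`. The gradient `Xᵀ(Y - Xb)` is then `(λ/2) sign β₁` on the
support and `X₂ᵀe - X₂ᵀX₁G⁻¹(X₁ᵀe - (λ/2) sign β₁)` off it. On `B_n` we have `|d| < |β₁|`
coordinatewise, so `b` has the signs of `β`; on `D_n` the off-support gradient is at most `λ/2`.
These are the KKT conditions of the convex Lasso objective, so `b` is a minimizer. Both events
are invariant under the normalizations by `n` and `√n`, so they may be read off the unnormalized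
Gram matrix.
-/

open MeasureTheory ProbabilityTheory Matrix

namespace Paper

variable {Ω E : Type*} [MeasurableSpace Ω] [MeasurableSpace E]

/-- The family of innovations: `some i` is `ε i` for `i : ℤ`, and `none` is the
independent copy `ε₀'` used in the coupled process. All are i.i.d. -/
structure Innov (μ : Measure Ω) (E : Type*) [MeasurableSpace E] : Type _ where
  ε : Option ℤ → Ω → E
  meas : ∀ i, Measurable (ε i)
  indep : iIndepFun ε μ
  ident : ∀ i j, μ.map (ε i) = μ.map (ε j)

/-- history `F_i = (…, ε_{i-1}, ε_i)`, recorded as `k ↦ ε_{i-k}`. -/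
def hist {μ : Measure Ω} (I : Innov μ E) (i : ℤ) (ω : Ω) : ℕ → E :=
  fun k => I.ε (some (i - k)) ω

/-- coupled history `F_i*`, with `ε₀` replaced by the independent copy `ε₀'`. -/
def histStar {μ : Measure Ω} (I : Innov μ E) (i : ℤ) (ω : Ω) : ℕ → E :=
  fun k => if i = (k : ℤ) then I.ε none ω else I.ε (some (i - k)) ω

/-- `‖f‖_q = (E |f|^q)^{1/q}` -/
noncomputable def lqNorm (μ : Measure Ω) (q : ℝ) (f : Ω → ℝ) : ℝ :=
  (∫ ω, |f ω| ^ q ∂μ) ^ (1 / q)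

/-- functional dependence measure `δ_{i,q}` of the process `i ↦ g (F_i)` -/
noncomputable def fdm (μ : Measure Ω) (I : Innov μ E) (g : (ℕ → E) → ℝ) (q : ℝ) (i : ℕ) : ℝ :=
  lqNorm μ q (fun ω => g (hist I i ω) - g (histStar I i ω))

/-- tail sum `Δ_{m,q}` -/
noncomputable def tailSum (μ : Measure Ω) (I : Innov μ E) (g : (ℕ → E) → ℝ) (q : ℝ) (m : ℕ) : ℝ :=
  ∑' i : ℕ, fdm μ I g q (m + i)

/-- dependence adjusted norm `‖·‖_{q,α}` -/
noncomputable def dan (μ : Measure Ω) (I : Innov μ E) (g : (ℕ → E) → ℝ) (q α : ℝ) : ℝ :=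
  ⨆ m : ℕ, ((m : ℝ) + 1) ^ α * tailSum μ I g q m

/-- `ω_{i,q}`, the `ℒ^∞` functional dependence measure of a vector process -/
noncomputable def fdmMax (μ : Measure Ω) (I : Innov μ E) {ι : Type*} [Fintype ι]
    (g : ι → (ℕ → E) → ℝ) (q : ℝ) (i : ℕ) : ℝ :=
  lqNorm μ q (fun ω => ⨆ j, |g j (hist I i ω) - g j (histStar I i ω)|)

/-- `ℒ^∞` dependence adjusted norm `‖ |x.|_∞ ‖_{q,α}` of a vector process -/
noncomputable def danMax (μ : Measure Ω) (I : Innov μ E) {ι : Type*} [Fintype ι]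
    (g : ι → (ℕ → E) → ℝ) (q α : ℝ) : ℝ :=
  ⨆ m : ℕ, ((m : ℝ) + 1) ^ α * ∑' i : ℕ, fdmMax μ I g q (m + i)

noncomputable def l1 {ι : Type*} [Fintype ι] (v : ι → ℝ) : ℝ := ∑ j, |v j|
noncomputable def l2sq {ι : Type*} [Fintype ι] (v : ι → ℝ) : ℝ := ∑ j, v j ^ 2
noncomputable def l2 {ι : Type*} [Fintype ι] (v : ι → ℝ) : ℝ := Real.sqrt (l2sq v)
noncomputable def linf {ι : Type*} [Fintype ι] (v : ι → ℝ) : ℝ := ⨆ j, |v j|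

/-- restriction of a vector to a coordinate set (zero outside `J`) -/
noncomputable def restr {ι : Type*} [Fintype ι] [DecidableEq ι] (J : Finset ι) (v : ι → ℝ) : ι → ℝ :=
  fun j => if j ∈ J then v j else 0

/-- `b` minimizes `n⁻¹ |Y - Xb|₂² + λ |b|₁` -/
def IsLassoSol {n p : ℕ} (X : Matrix (Fin n) (Fin p) ℝ) (Y : Fin n → ℝ) (lam : ℝ)
    (b : Fin p → ℝ) : Prop :=
  ∀ b' : Fin p → ℝ,
    (n : ℝ)⁻¹ * l2sq (Y - X.mulVec b) + lam * l1 b ≤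
      (n : ℝ)⁻¹ * l2sq (Y - X.mulVec b') + lam * l1 b'


/-- `b` minimizes `|Y - Xb|₂² + λ|b|₁` (no `n⁻¹` normalization), with the
covariates split into the `s` relevant ones and the `t` irrelevant ones. -/
def IsLassoSolS {n s t : ℕ} (X : Matrix (Fin n) (Fin s ⊕ Fin t) ℝ) (Y : Fin n → ℝ)
    (lam : ℝ) (b : Fin s ⊕ Fin t → ℝ) : Prop :=
  ∀ b' : Fin s ⊕ Fin t → ℝ,
    l2sq (Y - X.mulVec b) + lam * l1 b ≤ l2sq (Y - X.mulVec b') + lam * l1 b'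

lemma _root_.Real.sign_mul_self (x : ℝ) : Real.sign x * x = |x| := by
  rcases lt_trichotomy x 0 with h | rfl | h
  · rw [Real.sign_of_neg h, abs_of_neg h]; ring
  · simp
  · rw [Real.sign_of_pos h, abs_of_pos h, one_mul]

lemma _root_.Real.abs_sign_of_ne_zero {x : ℝ} (hx : x ≠ 0) : |Real.sign x| = 1 := by
  rcases Real.sign_apply_eq_of_ne_zero x hx with h | h <;> simp [h]

lemma _root_.Real.sign_add_of_abs_lt {x d : ℝ} (h : |d| < |x|) :
    Real.sign (x + d) = Real.sign x := by
  rcases abs_lt.mp h with ⟨h₁, h₂⟩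
  rcases lt_trichotomy x 0 with hx | rfl | hx
  · rw [abs_of_neg hx] at h₁ h₂
    rw [Real.sign_of_neg hx, Real.sign_of_neg (by linarith)]
  · simp only [abs_zero] at h; linarith [abs_nonneg d]
  · rw [abs_of_pos hx] at h₁ h₂
    rw [Real.sign_of_pos hx, Real.sign_of_pos (by linarith)]

section Lasso

variable {m ι : Type*} [Fintype m] [Fintype ι]

noncomputable def lassoObjective (X : Matrix m ι ℝ) (Y : m → ℝ) (lam : ℝ) (b : ι → ℝ) : ℝ :=
  l2sq (Y - X *ᵥ b) + lam * l1 b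

lemma l2sq_eq_dotProduct (v : ι → ℝ) : l2sq v = v ⬝ᵥ v := by
  simp only [l2sq, dotProduct, sq]

lemma l2sq_add_mulVec (X : Matrix m ι ℝ) (r : m → ℝ) (d : ι → ℝ) :
    l2sq (r + X *ᵥ d) = l2sq r + 2 * ((Xᵀ *ᵥ r) ⬝ᵥ d) + l2sq (X *ᵥ d) := by
  simp only [l2sq_eq_dotProduct, add_dotProduct, dotProduct_add, mulVec_transpose,
    ← dotProduct_mulVec, dotProduct_comm (X *ᵥ d) r]
  ring

lemma l2sq_nonneg (v : ι → ℝ) : 0 ≤ l2sq v :=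
  Finset.sum_nonneg fun _ _ => sq_nonneg _

theorem lassoObjective_le_of_kkt (X : Matrix m ι ℝ) (Y : m → ℝ) (lam : ℝ) (b : ι → ℝ)
    (hbound : ∀ j, |(Xᵀ *ᵥ (Y - X *ᵥ b)) j| ≤ lam / 2)
    (hsub : ∀ j, (Xᵀ *ᵥ (Y - X *ᵥ b)) j * b j = lam / 2 * |b j|) (b' : ι → ℝ) :
    lassoObjective X Y lam b ≤ lassoObjective X Y lam b' := by
  set c := Xᵀ *ᵥ (Y - X *ᵥ b)
  have hres : Y - X *ᵥ b' = (Y - X *ᵥ b) + X *ᵥ (b - b') := by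
    rw [mulVec_sub]; abel
  have hcoord : ∀ j, lam * |b j| - lam * |b' j| ≤ 2 * (c j * (b j - b' j)) := by
    intro j
    have : c j * b' j ≤ lam / 2 * |b' j| :=
      (le_abs_self _).trans <| (abs_mul _ _).trans_le <|
        mul_le_mul_of_nonneg_right (hbound j) (abs_nonneg _)
    linarith [hsub j]
  have hsum : lam * l1 b - lam * l1 b' ≤ 2 * (c ⬝ᵥ (b - b')) := by
    simp only [l1, dotProduct, Finset.mul_sum, ← Finset.sum_sub_distrib, Pi.sub_apply]
    exact Finset.sum_le_sum fun j _ => hcoord j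
  rw [lassoObjective, lassoObjective, hres, l2sq_add_mulVec]
  linarith [l2sq_nonneg (X *ᵥ (b - b'))]

end Lasso

section PrimalDualWitness

variable {m ι₁ ι₂ : Type*} [Fintype m] [Fintype ι₁] [Fintype ι₂]

lemma transpose_mulVec_residual_fromCols (X₁ : Matrix m ι₁ ℝ) (X₂ : Matrix m ι₂ ℝ)
    (e : m → ℝ) (β₁ d : ι₁ → ℝ) :
    (fromCols X₁ X₂)ᵀ *ᵥ
        (fromCols X₁ X₂ *ᵥ Sum.elim β₁ 0 + e - fromCols X₁ X₂ *ᵥ Sum.elim (β₁ + d) 0) =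
      Sum.elim (X₁ᵀ *ᵥ e - (X₁ᵀ * X₁) *ᵥ d) (X₂ᵀ *ᵥ e - (X₂ᵀ * X₁) *ᵥ d) := by
  have hres : fromCols X₁ X₂ *ᵥ Sum.elim β₁ 0 + e - fromCols X₁ X₂ *ᵥ Sum.elim (β₁ + d) 0 =
      e - X₁ *ᵥ d := by
    simp only [fromCols_mulVec_sumElim, mulVec_zero, add_zero, mulVec_add]
    abel
  rw [hres, transpose_fromCols, fromRows_mulVec, mulVec_sub, mulVec_sub, mulVec_mulVec,
    mulVec_mulVec]

variable [DecidableEq ι₁]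

lemma transpose_mulVec_residual_primalDualWitness (X₁ : Matrix m ι₁ ℝ) (X₂ : Matrix m ι₂ ℝ)
    (e : m → ℝ) (β₁ v : ι₁ → ℝ) (lam : ℝ) (hG : IsUnit (X₁ᵀ * X₁).det) :
    let d := (X₁ᵀ * X₁)⁻¹ *ᵥ (X₁ᵀ *ᵥ e - (lam / 2) • v)
    let M := X₂ᵀ * X₁ * (X₁ᵀ * X₁)⁻¹
    (fromCols X₁ X₂)ᵀ *ᵥ
        (fromCols X₁ X₂ *ᵥ Sum.elim β₁ 0 + e - fromCols X₁ X₂ *ᵥ Sum.elim (β₁ + d) 0) =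
      Sum.elim ((lam / 2) • v) (-(M *ᵥ (X₁ᵀ *ᵥ e) - X₂ᵀ *ᵥ e) + (lam / 2) • (M *ᵥ v)) := by
  intro d M
  rw [transpose_mulVec_residual_fromCols]
  congr 1
  · rw [mulVec_mulVec, mul_nonsing_inv _ hG, one_mulVec]
    abel
  · simp only [d, M, mulVec_mulVec, mulVec_sub, mulVec_smul, ← Matrix.mul_assoc]
    abel

theorem exists_lassoObjective_min_sign_eq (X₁ : Matrix m ι₁ ℝ) (X₂ : Matrix m ι₂ ℝ)
    (e : m → ℝ) (β₁ : ι₁ → ℝ) (hβ₁ : ∀ j, β₁ j ≠ 0) (lam : ℝ) (hlam : 0 ≤ lam)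
    (hG : IsUnit (X₁ᵀ * X₁).det)
    (hB : ∀ j, |((X₁ᵀ * X₁)⁻¹ *ᵥ (X₁ᵀ *ᵥ e)) j| <
      |β₁ j| - lam / 2 * |((X₁ᵀ * X₁)⁻¹ *ᵥ fun j => Real.sign (β₁ j)) j|)
    (hD : ∀ k, |((X₂ᵀ * X₁ * (X₁ᵀ * X₁)⁻¹) *ᵥ (X₁ᵀ *ᵥ e) - X₂ᵀ *ᵥ e) k| ≤
      lam / 2 * (1 - |((X₂ᵀ * X₁ * (X₁ᵀ * X₁)⁻¹) *ᵥ fun j => Real.sign (β₁ j)) k|)) :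
    ∃ b, (∀ b', lassoObjective (fromCols X₁ X₂) (fromCols X₁ X₂ *ᵥ Sum.elim β₁ 0 + e) lam b ≤
        lassoObjective (fromCols X₁ X₂) (fromCols X₁ X₂ *ᵥ Sum.elim β₁ 0 + e) lam b') ∧
      ∀ j, Real.sign (b j) = Real.sign (Sum.elim β₁ 0 j) := by
  set G := X₁ᵀ * X₁
  set M := X₂ᵀ * X₁ * G⁻¹
  set sgn : ι₁ → ℝ := fun j => Real.sign (β₁ j)
  have hlam₂ : 0 ≤ lam / 2 := by positivity
  set d := G⁻¹ *ᵥ (X₁ᵀ *ᵥ e - (lam / 2) • sgn)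
  have hd : ∀ j, |d j| < |β₁ j| := fun j => calc
    |d j| = |(G⁻¹ *ᵥ (X₁ᵀ *ᵥ e)) j - lam / 2 * (G⁻¹ *ᵥ sgn) j| := by
      simp only [d, mulVec_sub, mulVec_smul, Pi.sub_apply, Pi.smul_apply, smul_eq_mul]
    _ ≤ |(G⁻¹ *ᵥ (X₁ᵀ *ᵥ e)) j| + lam / 2 * |(G⁻¹ *ᵥ sgn) j| := by
      simpa only [abs_mul, abs_of_nonneg hlam₂] using abs_sub _ (lam / 2 * (G⁻¹ *ᵥ sgn) j)
    _ < |β₁ j| := by linarith [hB j]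
  have hgrad := transpose_mulVec_residual_primalDualWitness X₁ X₂ e β₁ sgn lam hG
  refine ⟨Sum.elim (β₁ + d) 0, fun b' => lassoObjective_le_of_kkt _ _ _ _ ?_ ?_ b', ?_⟩
  · rw [hgrad]
    rintro (j | k)
    · simp only [Sum.elim_inl, Pi.smul_apply, smul_eq_mul, abs_mul, abs_of_nonneg hlam₂, sgn,
        Real.abs_sign_of_ne_zero (hβ₁ j), mul_one, le_refl]
    · calc |(-(M *ᵥ (X₁ᵀ *ᵥ e) - X₂ᵀ *ᵥ e) + (lam / 2) • (M *ᵥ sgn)) k|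
          ≤ |(M *ᵥ (X₁ᵀ *ᵥ e) - X₂ᵀ *ᵥ e) k| + lam / 2 * |(M *ᵥ sgn) k| := by
            simpa only [Pi.add_apply, Pi.neg_apply, Pi.smul_apply, smul_eq_mul, abs_neg, abs_mul,
              abs_of_nonneg hlam₂] using
                abs_add_le (-(M *ᵥ (X₁ᵀ *ᵥ e) - X₂ᵀ *ᵥ e) k) (lam / 2 * (M *ᵥ sgn) k)
        _ ≤ lam / 2 := by linarith [hD k]
  · rw [hgrad]
    rintro (j | k)
    · simp only [Sum.elim_inl, Pi.smul_apply, smul_eq_mul, Pi.add_apply, sgn, mul_assoc,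
        ← Real.sign_add_of_abs_lt (hd j), Real.sign_mul_self]
    · simp
  · rintro (j | k)
    · exact Real.sign_add_of_abs_lt (hd j)
    · rfl

end PrimalDualWitness

section Normalization

variable {ι₁ ι₂ : Type*} [Fintype ι₁] [DecidableEq ι₁]

lemma _root_.Matrix.inv_smul_of_ne_zero {𝕜 : Type*} [Field 𝕜] {k : 𝕜} (hk : k ≠ 0)
    (G : Matrix ι₁ ι₁ 𝕜) (hG : IsUnit G.det) : (k • G)⁻¹ = k⁻¹ • G⁻¹ :=
  Matrix.inv_smul' G (Units.mk0 k hk) hG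

lemma _root_.Matrix.isUnit_det_of_isUnit_det_smul {𝕜 : Type*} [Field 𝕜] {k : 𝕜}
    {G : Matrix ι₁ ι₁ 𝕜} (h : IsUnit (k • G).det) : IsUnit G.det := by
  rw [det_smul] at h
  exact isUnit_of_mul_isUnit_right h

lemma _root_.Matrix.smul_mul_inv_smul {𝕜 : Type*} [Field 𝕜] {k : 𝕜} (hk : k ≠ 0)
    {G : Matrix ι₁ ι₁ 𝕜} (hG : IsUnit G.det) (H : Matrix ι₂ ι₁ 𝕜) :
    (k • H) * (k • G)⁻¹ = H * G⁻¹ := by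
  rw [Matrix.inv_smul_of_ne_zero hk G hG, Matrix.smul_mul, Matrix.mul_smul, smul_smul,
    mul_inv_cancel₀ hk, one_smul]

variable {r : ℝ} {G : Matrix ι₁ ι₁ ℝ}

lemma abs_inv_mulVec_lt_of_normalized (hr : 0 < r) (hG : IsUnit G.det) (z v : ι₁ → ℝ)
    (a lam : ℝ) (j : ι₁)
    (h : |((r⁻¹ • G)⁻¹ *ᵥ ((√r)⁻¹ • z)) j| <
      √r * a - lam / (2 * √r) * |((r⁻¹ • G)⁻¹ *ᵥ v) j|) :
    |(G⁻¹ *ᵥ z) j| < a - lam / 2 * |(G⁻¹ *ᵥ v) j| := by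
  obtain ⟨q, hq, rfl⟩ : ∃ q, 0 < q ∧ r = q ^ 2 :=
    ⟨√r, Real.sqrt_pos.2 hr, (Real.sq_sqrt hr.le).symm⟩
  rw [Real.sqrt_sq hq.le, Matrix.inv_smul_of_ne_zero (by positivity) G hG, inv_inv,
    smul_mulVec, smul_mulVec, mulVec_smul] at h
  simp only [Pi.smul_apply, smul_eq_mul, abs_mul, abs_of_pos (inv_pos.2 hq),
    abs_of_pos (pow_pos hq 2)] at h
  have key : q * |(G⁻¹ *ᵥ z) j| < q * (a - lam / 2 * |(G⁻¹ *ᵥ v) j|) := by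
    convert h using 1 <;> field_simp
  exact lt_of_mul_lt_mul_left key hq.le

lemma abs_mul_inv_mulVec_sub_le_of_normalized (hr : 0 < r) (hG : IsUnit G.det)
    (H : Matrix ι₂ ι₁ ℝ) (z₁ v : ι₁ → ℝ) (z₂ : ι₂ → ℝ) (lam : ℝ) (k : ι₂)
    (h : |(((r⁻¹ • H) * (r⁻¹ • G)⁻¹) *ᵥ ((√r)⁻¹ • z₁) - (√r)⁻¹ • z₂) k| ≤
      lam / (2 * √r) * (1 - |(((r⁻¹ • H) * (r⁻¹ • G)⁻¹) *ᵥ v) k|)) :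
    |((H * G⁻¹) *ᵥ z₁ - z₂) k| ≤ lam / 2 * (1 - |((H * G⁻¹) *ᵥ v) k|) := by
  have hq : 0 < √r := Real.sqrt_pos.2 hr
  rw [Matrix.smul_mul_inv_smul (inv_ne_zero hr.ne') hG, mulVec_smul, ← smul_sub] at h
  simp only [Pi.smul_apply, smul_eq_mul, abs_mul, abs_of_pos (inv_pos.2 hq)] at h
  have key : (√r)⁻¹ * |((H * G⁻¹) *ᵥ z₁ - z₂) k| ≤
      (√r)⁻¹ * (lam / 2 * (1 - |((H * G⁻¹) *ᵥ v) k|)) := by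
    convert h using 1; field_simp
  exact le_of_mul_le_mul_left key (inv_pos.2 hq)

end Normalization

theorem lasso_sign_recovery_event_general {Ω : Type*} [MeasurableSpace Ω]
    (μ : Measure Ω)
    {n s t : ℕ} (hn : 0 < n)
    (X : Ω → Matrix (Fin n) (Fin s ⊕ Fin t) ℝ) (e : Ω → Fin n → ℝ)
    (β : Fin s ⊕ Fin t → ℝ) (hβ1 : ∀ j, β (Sum.inl j) ≠ 0) (hβ2 : ∀ k, β (Sum.inr k) = 0)
    (Y : Ω → Fin n → ℝ) (hY : ∀ ω, Y ω = (X ω).mulVec β + e ω)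
    (lam : ℝ) (hlam : 0 ≤ lam)
    (S11 : Ω → Matrix (Fin s) (Fin s) ℝ)
    (hS11 : ∀ ω, S11 ω =
      (n : ℝ)⁻¹ • (((X ω).submatrix id Sum.inl)ᵀ * (X ω).submatrix id Sum.inl))
    (hinv : ∀ ω, IsUnit (S11 ω).det)
    (S21 : Ω → Matrix (Fin t) (Fin s) ℝ)
    (hS21 : ∀ ω, S21 ω =
      (n : ℝ)⁻¹ • (((X ω).submatrix id Sum.inr)ᵀ * (X ω).submatrix id Sum.inl))
    (W : Ω → (Fin s ⊕ Fin t) → ℝ)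
    (hW : ∀ ω, W ω = (Real.sqrt n)⁻¹ • (X ω)ᵀ.mulVec (e ω))
    (sgn1 : Fin s → ℝ) (hsgn1 : ∀ j, sgn1 j = Real.sign (β (Sum.inl j)))
    (Bn Dn : Set Ω)
    (hBn : Bn = {ω | ∀ j : Fin s,
      |((S11 ω)⁻¹.mulVec fun j' => W ω (Sum.inl j')) j| <
        Real.sqrt n * |β (Sum.inl j)| -
          lam / (2 * Real.sqrt n) * |((S11 ω)⁻¹.mulVec sgn1) j|})
    (hDn : Dn = {ω | ∀ k : Fin t,
      |((S21 ω * (S11 ω)⁻¹).mulVec (fun j' => W ω (Sum.inl j')) -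
          fun k' => W ω (Sum.inr k')) k| ≤
        lam / (2 * Real.sqrt n) * (1 - |((S21 ω * (S11 ω)⁻¹).mulVec sgn1) k|)}) :
    (∀ ω ∈ Bn ∩ Dn, ∃ b : Fin s ⊕ Fin t → ℝ,
        IsLassoSolS (X ω) (Y ω) lam b ∧ ∀ j, Real.sign (b j) = Real.sign (β j)) ∧
      μ (Bn ∩ Dn) ≤
        μ {ω | ∃ b : Fin s ⊕ Fin t → ℝ,
          IsLassoSolS (X ω) (Y ω) lam b ∧ ∀ j, Real.sign (b j) = Real.sign (β j)} := by
  have hn' : (0 : ℝ) < n := Nat.cast_pos.2 hn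
  have hβ : β = Sum.elim (fun j => β (Sum.inl j)) 0 := by
    ext (j | k)
    · rfl
    · exact hβ2 k
  have hsgn : sgn1 = fun j => Real.sign (β (Sum.inl j)) := funext hsgn1
  have recovery : ∀ ω ∈ Bn ∩ Dn, ∃ b : Fin s ⊕ Fin t → ℝ,
      IsLassoSolS (X ω) (Y ω) lam b ∧ ∀ j, Real.sign (b j) = Real.sign (β j) := by
    rintro ω ⟨hB, hD⟩
    set X₁ := (X ω).submatrix id Sum.inl
    set X₂ := (X ω).submatrix id Sum.inr
    have hW₁ : (fun j => W ω (Sum.inl j)) = (√n)⁻¹ • (X₁ᵀ *ᵥ e ω) := by rw [hW]; rfl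
    have hW₂ : (fun k => W ω (Sum.inr k)) = (√n)⁻¹ • (X₂ᵀ *ᵥ e ω) := by rw [hW]; rfl
    have hG : IsUnit (X₁ᵀ * X₁).det :=
      Matrix.isUnit_det_of_isUnit_det_smul (hS11 ω ▸ hinv ω)
    rw [hBn, Set.mem_ofPred_eq, hS11, hW₁, hsgn] at hB
    rw [hDn, Set.mem_ofPred_eq, hS11, hS21, hW₁, hW₂, hsgn] at hD
    rw [hY, ← fromCols_toCols (X ω), hβ]
    -- `toCols₁ (X ω)` is `X₁`, and `IsLassoSolS` is minimality of `lassoObjective`, by `rfl`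
    exact exists_lassoObjective_min_sign_eq X₁ X₂ (e ω) _ hβ1 lam hlam hG
      (fun j => abs_inv_mulVec_lt_of_normalized hn' hG _ _ _ _ j (hB j))
      (fun k => abs_mul_inv_mulVec_sub_le_of_normalized hn' hG _ _ _ _ _ k (hD k))
  exact ⟨recovery, measure_mono recovery⟩

/-- sign recovery of the Lasso on the event `B_n ∩ D_n`
(Proposition 1 of Zhao and Yu (2006), random-design version). -/
theorem lasso_sign_recovery_event {Ω : Type*} [MeasurableSpace Ω]
    (μ : Measure Ω) [IsProbabilityMeasure μ]
    {n s t : ℕ} (hn : 0 < n)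
    (X : Ω → Matrix (Fin n) (Fin s ⊕ Fin t) ℝ) (e : Ω → Fin n → ℝ)
    (β : Fin s ⊕ Fin t → ℝ) (hβ1 : ∀ j, β (Sum.inl j) ≠ 0) (hβ2 : ∀ k, β (Sum.inr k) = 0)
    (Y : Ω → Fin n → ℝ) (hY : ∀ ω, Y ω = (X ω).mulVec β + e ω)
    (lam : ℝ) (hlam : 0 ≤ lam)
    (S11 : Ω → Matrix (Fin s) (Fin s) ℝ)
    (hS11 : ∀ ω, S11 ω =
      (n : ℝ)⁻¹ • (((X ω).submatrix id Sum.inl)ᵀ * (X ω).submatrix id Sum.inl))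
    (hinv : ∀ ω, IsUnit (S11 ω).det)
    (S21 : Ω → Matrix (Fin t) (Fin s) ℝ)
    (hS21 : ∀ ω, S21 ω =
      (n : ℝ)⁻¹ • (((X ω).submatrix id Sum.inr)ᵀ * (X ω).submatrix id Sum.inl))
    (W : Ω → (Fin s ⊕ Fin t) → ℝ)
    (hW : ∀ ω, W ω = (Real.sqrt n)⁻¹ • (X ω)ᵀ.mulVec (e ω))
    (sgn1 : Fin s → ℝ) (hsgn1 : ∀ j, sgn1 j = Real.sign (β (Sum.inl j)))
    (Bn Dn : Set Ω)
    (hBn : Bn = {ω | ∀ j : Fin s,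
      |((S11 ω)⁻¹.mulVec fun j' => W ω (Sum.inl j')) j| <
        Real.sqrt n * |β (Sum.inl j)| -
          lam / (2 * Real.sqrt n) * |((S11 ω)⁻¹.mulVec sgn1) j|})
    (hDn : Dn = {ω | ∀ k : Fin t,
      |((S21 ω * (S11 ω)⁻¹).mulVec (fun j' => W ω (Sum.inl j')) -
          fun k' => W ω (Sum.inr k')) k| ≤
        lam / (2 * Real.sqrt n) * (1 - |((S21 ω * (S11 ω)⁻¹).mulVec sgn1) k|)}) :
    (∀ ω ∈ Bn ∩ Dn, ∃ b : Fin s ⊕ Fin t → ℝ,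
        IsLassoSolS (X ω) (Y ω) lam b ∧ ∀ j, Real.sign (b j) = Real.sign (β j)) ∧
      μ (Bn ∩ Dn) ≤
        μ {ω | ∃ b : Fin s ⊕ Fin t → ℝ,
          IsLassoSolS (X ω) (Y ω) lam b ∧ ∀ j, Real.sign (b j) = Real.sign (β j)} :=
  lasso_sign_recovery_event_general μ hn X e β hβ1 hβ2 Y hY lam hlam S11 hS11 hinv S21 hS21 W hW
    sgn1 hsgn1 Bn Dn hBn hDn

end Paper
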